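/- For every α ∈ (0,1], every function u satisfying the stated conditions, and every irrational x ∈ ℝ, B_{α,u}(x) < ∞ if and only if B_{1,u}(x) < ∞; that is, the set of (α,u)-Brjuno numbers does not depend on α ∈ (0,1]. -/

import Mathlib

open Set Filter
open scoped ENNReal

/-- The `α`-continued fraction map `A_α(x) = |1/x − ⌊1/x + 1 − α⌋|`.
For `α = 1` this is the Gauss map. -/
noncomputable def Aa (α : ℝ) (x : ℝ) : ℝ := |1 / x - ⌊1 / x + 1 - α⌋|

/-- `x_{α,0} = |x − ⌊x + 1 − α⌋|`. -/
noncomputable def xa0 (α x : ℝ) : ℝ := |x - ⌊x + 1 - α⌋|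

/-- The orbit `x_{α,n} = A_α^n(x_{α,0})`. -/
noncomputable def xfull (α x : ℝ) (n : ℕ) : ℝ := (Aa α)^[n] (xa0 α x)

/-- The `(α,u)`-Brjuno function `B_{α,u}(x) = ∑_{n≥0} β_{α,n−1}·u(x_{α,n}) ∈ [0,∞]`,
where `β_{α,n−1} = x_{α,0}⋯x_{α,n−1}` (`β_{α,-1} = 1`). -/
noncomputable def Bau (α : ℝ) (u : ℝ → ℝ) (x : ℝ) : ℝ≥0∞ :=
  ∑' n : ℕ, ENNReal.ofReal ((∏ i ∈ Finset.range n, xfull α x i) * u (xfull α x n))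

/-!
Over a Gauss step `y_m ↦ y_{m+1}` with partial quotient `a_m`, the `α`-orbit of `x` either
makes one step, at `y_m` (if `y_m < α`), or `a_m < 1/α` steps: `a_m - 1` at points of `[1/2, 1]`
and one at `y_{m+1} / (1 + y_{m+1})`, after which it goes on with `y_{m+2}`. The product in front
of each of these terms is at most `β_{1,m-1}`, and `β_{1,m+1} ≤ β_{1,m-1} / 2`, so the terms
where `u` is evaluated on `[1/2, 1]` or on `[α, 1]` have a finite sum. The remaining terms of
`B_{α,u}` and `B_{1,u}` agree up to a factor `≤ 2` and an error `C β_{1,m}`, since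
`|u (z / (1 + z)) - u z| ≤ C` by the mean value theorem and the bound on `z² u'(z)`.
-/

lemma Irrational.fract_mem_Ioo {z : ℝ} (h : Irrational z) : Int.fract z ∈ Set.Ioo 0 1 :=
  ⟨Int.fract_pos.mpr (h.ne_int _), Int.fract_lt_one z⟩

namespace Brjuno

open Topology

noncomputable def gaussOrbit (x : ℝ) (m : ℕ) : ℝ := xfull 1 x m

noncomputable def partialQuot (x : ℝ) (m : ℕ) : ℕ := ⌊(gaussOrbit x m)⁻¹⌋₊

noncomputable def gaussProd (x : ℝ) (m : ℕ) : ℝ := ∏ i ∈ Finset.range m, gaussOrbit x i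

lemma xfull_succ (α x : ℝ) (n : ℕ) : xfull α x (n + 1) = Aa α (xfull α x n) :=
  Function.iterate_succ_apply' _ _ _

lemma abs_intCast_add_sub_floor {α : ℝ} (hα : α ∈ Ioc 0 1) (n : ℤ) {w : ℝ} (hw : w ∈ Ioo 0 1) :
    |n + w - ⌊n + w + 1 - α⌋| = if α ≤ w then 1 - w else w := by
  rw [show (n : ℝ) + w + 1 - α = w + 1 - α + n by ring, Int.floor_add_intCast]
  split_ifs with h
  · rw [(Int.floor_eq_iff (z := 1)).mpr
      ⟨by push_cast; linarith, by push_cast; linarith [hα.1, hw.2]⟩]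
    push_cast
    rw [abs_of_nonpos (by linarith [hw.2])]
    ring
  · rw [(Int.floor_eq_iff (z := 0)).mpr
      ⟨by push_cast; linarith [hw.1, hα.2], by push_cast; linarith⟩]
    push_cast
    rw [abs_of_pos (by linarith [hw.1])]
    ring

lemma Aa_of_one_div_eq {α : ℝ} (hα : α ∈ Ioc 0 1) {z w : ℝ} (n : ℤ) (hz : 1 / z = n + w)
    (hw : w ∈ Ioo 0 1) : Aa α z = if α ≤ w then 1 - w else w := by
  rw [Aa, hz, abs_intCast_add_sub_floor hα n hw]

lemma gaussOrbit_zero (x : ℝ) : gaussOrbit x 0 = Int.fract x := by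
  simp [gaussOrbit, xfull, xa0, Int.self_sub_floor, abs_of_nonneg (Int.fract_nonneg x)]

lemma gaussOrbit_succ (x : ℝ) (m : ℕ) : gaussOrbit x (m + 1) = Int.fract (gaussOrbit x m)⁻¹ := by
  rw [gaussOrbit, xfull_succ, Aa, ← gaussOrbit, one_div, add_sub_cancel_right, Int.self_sub_floor,
    abs_of_nonneg (Int.fract_nonneg _)]

section Gauss

variable {x : ℝ}

lemma irrational_gaussOrbit (hirr : Irrational x) (m : ℕ) : Irrational (gaussOrbit x m) := by
  induction m with
  | zero => simpa [gaussOrbit_zero] using hirr.sub_intCast ⌊x⌋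
  | succ m ih => rw [gaussOrbit_succ, ← Int.self_sub_floor]; exact ih.inv.sub_intCast _

lemma gaussOrbit_mem_Ioo (hirr : Irrational x) (m : ℕ) : gaussOrbit x m ∈ Ioo 0 1 := by
  cases m with
  | zero => exact gaussOrbit_zero x ▸ hirr.fract_mem_Ioo
  | succ m => exact gaussOrbit_succ x m ▸ (irrational_gaussOrbit hirr m).inv.fract_mem_Ioo

lemma gaussOrbit_pos (hirr : Irrational x) (m : ℕ) : 0 < gaussOrbit x m :=
  (gaussOrbit_mem_Ioo hirr m).1

lemma inv_gaussOrbit (hirr : Irrational x) (m : ℕ) :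
    (gaussOrbit x m)⁻¹ = partialQuot x m + gaussOrbit x (m + 1) := by
  rw [gaussOrbit_succ, partialQuot,
    natCast_floor_eq_intCast_floor (inv_pos.mpr (gaussOrbit_pos hirr m)).le, Int.floor_add_fract]

lemma one_le_partialQuot (hirr : Irrational x) (m : ℕ) : 1 ≤ partialQuot x m := by
  have := gaussOrbit_mem_Ioo hirr m
  exact Nat.le_floor (by rw [Nat.cast_one]; exact (one_le_inv₀ this.1).mpr this.2.le)

lemma gaussOrbit_mul_gaussOrbit_succ (hirr : Irrational x) (m : ℕ) :
    gaussOrbit x m * gaussOrbit x (m + 1) = 1 - partialQuot x m * gaussOrbit x m := by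
  have h := inv_gaussOrbit hirr m
  have h0 := (gaussOrbit_pos hirr m).ne'
  field_simp at h
  linarith

lemma partialQuot_mul_lt_one (hirr : Irrational x) (m : ℕ) :
    (partialQuot x m : ℝ) * gaussOrbit x m < 1 := by
  have := gaussOrbit_mul_gaussOrbit_succ hirr m
  nlinarith [gaussOrbit_pos hirr m, gaussOrbit_pos hirr (m + 1)]

lemma natCast_mul_gaussOrbit_lt_one (hirr : Irrational x) {m k : ℕ} (hk : k ≤ partialQuot x m) :
    (k : ℝ) * gaussOrbit x m < 1 :=
  lt_of_le_of_lt (by gcongr; exact (gaussOrbit_pos hirr m).le) (partialQuot_mul_lt_one hirr m)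

lemma gaussProd_succ (x : ℝ) (m : ℕ) : gaussProd x (m + 1) = gaussProd x m * gaussOrbit x m :=
  Finset.prod_range_succ _ _

lemma gaussProd_pos (hirr : Irrational x) (m : ℕ) : 0 < gaussProd x m :=
  Finset.prod_pos fun i _ => gaussOrbit_pos hirr i

lemma gaussProd_succ_le (hirr : Irrational x) (m : ℕ) : gaussProd x (m + 1) ≤ gaussProd x m := by
  rw [gaussProd_succ]
  exact mul_le_of_le_one_right (gaussProd_pos hirr m).le (gaussOrbit_mem_Ioo hirr m).2.le

lemma gaussOrbit_mul_gaussOrbit_succ_le_half (hirr : Irrational x) (m : ℕ) :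
    gaussOrbit x m * gaussOrbit x (m + 1) ≤ 1 / 2 := by
  have hy := gaussOrbit_mem_Ioo hirr m
  have hy' := gaussOrbit_mem_Ioo hirr (m + 1)
  rcases le_or_gt (gaussOrbit x m) (1 / 2) with h | h
  · nlinarith [mul_le_mul h hy'.2.le hy'.1.le (by norm_num)]
  · have ha : (1 : ℝ) ≤ partialQuot x m := by exact_mod_cast one_le_partialQuot hirr m
    rw [gaussOrbit_mul_gaussOrbit_succ hirr m]
    nlinarith

lemma gaussProd_two_mul_le (hirr : Irrational x) (j : ℕ) : gaussProd x (2 * j) ≤ (1 / 2) ^ j := by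
  induction j with
  | zero => simp [gaussProd]
  | succ j ih =>
    rw [show 2 * (j + 1) = 2 * j + 1 + 1 by ring, gaussProd_succ, gaussProd_succ, mul_assoc,
      pow_succ]
    exact mul_le_mul ih (gaussOrbit_mul_gaussOrbit_succ_le_half hirr _)
      (mul_pos (gaussOrbit_pos hirr _) (gaussOrbit_pos hirr _)).le (by positivity)

lemma summable_gaussProd (hirr : Irrational x) : Summable (gaussProd x) := by
  have hgeom := summable_geometric_of_lt_one (r := (1 / 2 : ℝ)) (by norm_num) (by norm_num)
  refine Summable.even_add_odd ?_ ?_ <;> refine hgeom.of_nonneg_of_le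
    (fun j => (gaussProd_pos hirr _).le) fun j => ?_
  · exact gaussProd_two_mul_le hirr j
  · exact (gaussProd_succ_le hirr _).trans (gaussProd_two_mul_le hirr j)

lemma tsum_ofReal_gaussProd_lt_top (hirr : Irrational x) :
    ∑' m, ENNReal.ofReal (gaussProd x m) < ⊤ := by
  rw [← ENNReal.ofReal_tsum_of_nonneg (fun m => (gaussProd_pos hirr m).le)
    (summable_gaussProd hirr)]
  exact ENNReal.ofReal_lt_top

end Gauss

/-- With `y_m = gaussOrbit x m`, the state `(m, 0)` stands for the point `y_m` of the `α`-orbit and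
`(m, k + 1)` for the point `(1 - (k + 1) y_m) / (1 - k y_m)`; `stateProd` is the product of the
points of the `α`-orbit before it. -/
noncomputable def stateVal (x : ℝ) : ℕ × ℕ → ℝ
  | (m, 0) => gaussOrbit x m
  | (m, k + 1) => (1 - (k + 1) * gaussOrbit x m) / (1 - k * gaussOrbit x m)

noncomputable def stateProd (x : ℝ) : ℕ × ℕ → ℝ
  | (m, 0) => gaussProd x m
  | (m, k + 1) => gaussProd x m * (1 - k * gaussOrbit x m)

noncomputable def entryState (α x : ℝ) (m : ℕ) : ℕ × ℕ :=
  if α ≤ gaussOrbit x m then (m, 1) else (m, 0)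

noncomputable def nextState (α x : ℝ) : ℕ × ℕ → ℕ × ℕ
  | (m, 0) => entryState α x (m + 1)
  | (m, k + 1) => if k + 2 ≤ partialQuot x m then (m, k + 2) else entryState α x (m + 2)

noncomputable def state (α x : ℝ) (n : ℕ) : ℕ × ℕ := (nextState α x)^[n] (entryState α x 0)

def Admissible (α x : ℝ) : ℕ × ℕ → Prop
  | (m, 0) => gaussOrbit x m < α
  | (m, k + 1) => α ≤ gaussOrbit x m ∧ k + 1 ≤ partialQuot x m

section States

variable {α x : ℝ}

lemma state_succ (α x : ℝ) (n : ℕ) : state α x (n + 1) = nextState α x (state α x n) :=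
  Function.iterate_succ_apply' _ _ _

lemma stateVal_entryState (α x : ℝ) (m : ℕ) : stateVal x (entryState α x m) =
    if α ≤ gaussOrbit x m then 1 - gaussOrbit x m else gaussOrbit x m := by
  unfold entryState; split_ifs <;> simp [stateVal]

lemma stateProd_entryState (α x : ℝ) (m : ℕ) : stateProd x (entryState α x m) = gaussProd x m := by
  unfold entryState; split_ifs <;> simp [stateProd]

lemma admissible_entryState (hirr : Irrational x) (m : ℕ) : Admissible α x (entryState α x m) := by
  unfold entryState; split_ifs with h
  · exact ⟨h, one_le_partialQuot hirr m⟩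
  · exact lt_of_not_ge h

lemma Admissible.nextState (hirr : Irrational x) {s : ℕ × ℕ} (hs : Admissible α x s) :
    Admissible α x (nextState α x s) := by
  obtain ⟨m, _ | k⟩ := s
  · exact admissible_entryState hirr _
  · simp only [Brjuno.nextState]
    split_ifs with h
    · exact ⟨hs.1, h⟩
    · exact admissible_entryState hirr _

lemma admissible_state (hirr : Irrational x) (n : ℕ) : Admissible α x (state α x n) := by
  induction n with
  | zero => exact admissible_entryState hirr 0
  | succ n ih => rw [state_succ]; exact ih.nextState hirr

lemma lt_nextState (α x : ℝ) (s : ℕ × ℕ) : toLex s < toLex (nextState α x s) := by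
  obtain ⟨m, _ | k⟩ := s
  · simp only [Brjuno.nextState, entryState]
    split_ifs <;> simp [Prod.Lex.lt_iff]
  · simp only [Brjuno.nextState, entryState]
    split_ifs <;> simp [Prod.Lex.lt_iff]

lemma state_injective (α x : ℝ) : Function.Injective (state α x) := by
  have : StrictMono (toLex ∘ state α x) :=
    strictMono_nat_of_lt_succ fun n => by simpa [state_succ] using lt_nextState α x (state α x n)
  exact fun a b hab => this.injective (congrArg toLex hab)

lemma one_sub_mul_gaussOrbit_of_partialQuot_eq (hirr : Irrational x) {m k : ℕ}
    (hk : partialQuot x m = k + 1) :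
    1 - (k + 1) * gaussOrbit x m = gaussOrbit x m * gaussOrbit x (m + 1) ∧
      1 - k * gaussOrbit x m = gaussOrbit x m * (1 + gaussOrbit x (m + 1)) := by
  have h := gaussOrbit_mul_gaussOrbit_succ hirr m
  rw [hk, Nat.cast_add_one] at h
  constructor <;> linarith

lemma stateVal_exit (hirr : Irrational x) (m : ℕ) : stateVal x (m, partialQuot x m) =
    gaussOrbit x (m + 1) / (1 + gaussOrbit x (m + 1)) := by
  obtain ⟨k, hk⟩ := Nat.exists_eq_add_of_le' (one_le_partialQuot hirr m)
  obtain ⟨h1, h2⟩ := one_sub_mul_gaussOrbit_of_partialQuot_eq hirr hk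
  rw [hk, stateVal, h1, h2, mul_div_mul_left _ _ (gaussOrbit_pos hirr m).ne']

lemma stateProd_exit (hirr : Irrational x) (m : ℕ) : stateProd x (m, partialQuot x m) =
    gaussProd x (m + 1) * (1 + gaussOrbit x (m + 1)) := by
  obtain ⟨k, hk⟩ := Nat.exists_eq_add_of_le' (one_le_partialQuot hirr m)
  rw [hk, stateProd, (one_sub_mul_gaussOrbit_of_partialQuot_eq hirr hk).2, gaussProd_succ,
    mul_assoc]

lemma nextState_exit (hirr : Irrational x) (m : ℕ) :
    nextState α x (m, partialQuot x m) = entryState α x (m + 2) := by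
  obtain ⟨k, hk⟩ := Nat.exists_eq_add_of_le' (one_le_partialQuot hirr m)
  simp [Brjuno.nextState, hk]

end States

section Dynamics

variable {α x : ℝ}

lemma Aa_gaussOrbit (hα : α ∈ Ioc 0 1) (hirr : Irrational x) (m : ℕ) :
    Aa α (gaussOrbit x m) = stateVal x (entryState α x (m + 1)) := by
  rw [stateVal_entryState,
    Aa_of_one_div_eq hα (partialQuot x m) _ (gaussOrbit_mem_Ioo hirr (m + 1))]
  rw [one_div, inv_gaussOrbit hirr m, Int.cast_natCast]

lemma Aa_stateVal_of_lt_partialQuot (hα : α ∈ Ioc 0 1) (hirr : Irrational x) {m k : ℕ}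
    (hy : α ≤ gaussOrbit x m) (hk : k + 2 ≤ partialQuot x m) :
    Aa α (stateVal x (m, k + 1)) = stateVal x (m, k + 2) := by
  simp only [stateVal, Nat.cast_add, Nat.cast_one]
  set y := gaussOrbit x m
  have hy0 : 0 < y := gaussOrbit_pos hirr m
  have hk2 : ((k : ℝ) + 2) * y < 1 := by
    exact_mod_cast natCast_mul_gaussOrbit_lt_one hirr hk
  have hc1 : 0 < 1 - ((k : ℝ) + 1) * y := by nlinarith
  set w := y / (1 - ((k : ℝ) + 1) * y)
  have hyw : y ≤ w := le_div_self hy0.le hc1 (by nlinarith [Nat.cast_nonneg (α := ℝ) k])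
  have hw1 : w < 1 := (div_lt_one hc1).mpr (by nlinarith)
  have hinv : 1 / ((1 - ((k : ℝ) + 1) * y) / (1 - k * y)) = ((1 : ℤ) : ℝ) + w := by
    rw [one_div_div, Int.cast_one, show 1 - (k : ℝ) * y = 1 - ((k : ℝ) + 1) * y + y by ring,
      add_div, div_self hc1.ne']
  rw [Aa_of_one_div_eq hα 1 hinv ⟨hy0.trans_le hyw, hw1⟩, if_pos (hy.trans hyw),
    one_sub_div hc1.ne']
  congr 1
  ring

lemma Aa_stateVal_exit (hα : α ∈ Ioc 0 1) (hirr : Irrational x) (m : ℕ) :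
    Aa α (stateVal x (m, partialQuot x m)) = stateVal x (entryState α x (m + 2)) := by
  have hy' := (gaussOrbit_pos hirr (m + 1)).ne'
  rw [stateVal_exit hirr, stateVal_entryState,
    Aa_of_one_div_eq hα (partialQuot x (m + 1) + 1) _ (gaussOrbit_mem_Ioo hirr (m + 2))]
  rw [one_div_div, add_div, div_self hy', div_eq_inv_mul, mul_one, inv_gaussOrbit hirr]
  push_cast
  ring

lemma Aa_stateVal (hα : α ∈ Ioc 0 1) (hirr : Irrational x) {s : ℕ × ℕ}
    (hs : Admissible α x s) : Aa α (stateVal x s) = stateVal x (nextState α x s) := by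
  obtain ⟨m, _ | k⟩ := s
  · exact Aa_gaussOrbit hα hirr m
  · simp only [nextState]
    split_ifs with hk
    · exact Aa_stateVal_of_lt_partialQuot hα hirr hs.1 hk
    · rw [show k + 1 = partialQuot x m by have := hs.2; omega]
      exact Aa_stateVal_exit hα hirr m

lemma stateProd_nextState (hirr : Irrational x) {s : ℕ × ℕ} (hs : Admissible α x s) :
    stateProd x (nextState α x s) = stateProd x s * stateVal x s := by
  obtain ⟨m, _ | k⟩ := s
  · exact (stateProd_entryState α x _).trans (gaussProd_succ x m)
  · simp only [nextState]
    split_ifs with hk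
    · have hne : 1 - (k : ℝ) * gaussOrbit x m ≠ 0 :=
        (sub_pos.mpr (natCast_mul_gaussOrbit_lt_one hirr (by omega))).ne'
      simp only [stateProd, stateVal, Nat.cast_add, Nat.cast_one]
      rw [mul_assoc, mul_div_cancel₀ _ hne]
    · have hne := (add_pos one_pos (gaussOrbit_pos hirr (m + 1))).ne'
      rw [show k + 1 = partialQuot x m by have := hs.2; omega, stateProd_exit hirr,
        stateVal_exit hirr, stateProd_entryState, gaussProd_succ x (m + 1), mul_assoc,
        mul_div_cancel₀ _ hne]

lemma xfull_eq_stateVal (hα : α ∈ Ioc 0 1) (hirr : Irrational x) (n : ℕ) :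
    xfull α x n = stateVal x (state α x n) := by
  induction n with
  | zero =>
    have h := abs_intCast_add_sub_floor hα ⌊x⌋ hirr.fract_mem_Ioo
    rwa [Int.floor_add_fract, ← gaussOrbit_zero, ← stateVal_entryState] at h
  | succ n ih => rw [xfull_succ, ih, state_succ, Aa_stateVal hα hirr (admissible_state hirr n)]

end Dynamics

section Regularity

variable {u : ℝ → ℝ}

lemma exists_abs_le_of_mem_Icc (hcont : ContinuousOn u (Ioc 0 1)) {c : ℝ} (hc : 0 < c)
    (hc1 : c ≤ 1) : ∃ M, 0 ≤ M ∧ ∀ t ∈ Icc c 1, |u t| ≤ M := by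
  obtain ⟨M, hM⟩ := isCompact_Icc.exists_bound_of_continuousOn
    (hcont.mono fun t ht => ⟨hc.trans_le ht.1, ht.2⟩)
  exact ⟨M, (abs_nonneg _).trans (hM c ⟨le_rfl, hc1⟩), hM⟩

lemma exists_abs_deriv_le_div_sq
    (hx2u : ∃ L : ℝ, Tendsto (fun y => y ^ 2 * deriv u y) (𝓝[>] 0) (𝓝 L)) :
    ∃ K t₀ : ℝ, 0 ≤ K ∧ 0 < t₀ ∧ ∀ t ∈ Ioo 0 t₀, |deriv u t| ≤ K / t ^ 2 := by
  obtain ⟨L, hL⟩ := hx2u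
  obtain ⟨t₀, ht₀, hsub⟩ := mem_nhdsGT_iff_exists_Ioo_subset.mp
    (hL.abs.eventually (eventually_le_nhds (lt_add_one |L|)))
  refine ⟨|L| + 1, t₀, by positivity, ht₀, fun t ht => ?_⟩
  have ht2 : 0 < t ^ 2 := pow_pos ht.1 2
  rw [le_div_iff₀ ht2, ← abs_of_pos ht2, ← abs_mul, mul_comm]
  exact hsub ht

lemma exists_abs_comp_div_one_add_sub_le (hcont : ContinuousOn u (Ioc 0 1))
    (hC1 : ContDiffOn ℝ 1 u (Ioo 0 1))
    (hx2u : ∃ L : ℝ, Tendsto (fun y => y ^ 2 * deriv u y) (𝓝[>] 0) (𝓝 L)) :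
    ∃ C, 0 ≤ C ∧ ∀ z ∈ Ioo (0 : ℝ) 1, |u (z / (1 + z)) - u z| ≤ C := by
  obtain ⟨K, t₀, hK0, ht₀, hK⟩ := exists_abs_deriv_le_div_sq hx2u
  obtain ⟨M, hM0, hM⟩ := exists_abs_le_of_mem_Icc hcont (c := min t₀ 1 / 2) (by positivity)
    (by linarith [min_le_right t₀ 1])
  refine ⟨max (4 * K) (2 * M), hM0.trans (by linarith [le_max_right (4 * K) (2 * M)]),
    fun z hz => ?_⟩
  have h1z : 0 < 1 + z := by linarith [hz.1]
  set w := z / (1 + z)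
  have hw0 : 0 < w := div_pos hz.1 h1z
  have hwz : w ≤ z := div_le_self hz.1.le (by linarith [hz.1])
  have hzw : z / 2 ≤ w := div_le_div_of_nonneg_left hz.1.le h1z (by linarith [hz.2])
  rcases lt_or_ge z (min t₀ 1) with hzt | hzt
  · -- mean value theorem: `|u'| ≤ 4 K / z²` on `[w, z]` and `z - w ≤ z²`
    have hdiff : ∀ t ∈ Icc w z, DifferentiableAt ℝ u t := fun t ht =>
      (hC1.differentiableOn one_ne_zero).differentiableAt
        (isOpen_Ioo.mem_nhds ⟨hw0.trans_le ht.1, ht.2.trans_lt hz.2⟩)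
    have hderiv : ∀ t ∈ Icc w z, ‖deriv u t‖ ≤ 4 * K / z ^ 2 := fun t ht => by
      have ht0 : 0 < t := hw0.trans_le ht.1
      calc ‖deriv u t‖ ≤ K / t ^ 2 :=
            hK t ⟨ht0, ht.2.trans_lt (hzt.trans_le (min_le_left _ _))⟩
        _ ≤ K / (z / 2) ^ 2 := div_le_div_of_nonneg_left hK0 (pow_pos (half_pos hz.1) 2)
            (pow_le_pow_left₀ (half_pos hz.1).le (hzw.trans ht.1) 2)
        _ = 4 * K / z ^ 2 := by ring
    have hmvt := (convex_Icc w z).norm_image_sub_le_of_norm_deriv_le hdiff hderiv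
      ⟨le_rfl, hwz⟩ ⟨hwz, le_rfl⟩
    have hzw2 : z - w ≤ z ^ 2 := by
      have : z - w = z ^ 2 / (1 + z) := by simp only [w]; field_simp; ring
      rw [this]; exact div_le_self (sq_nonneg z) (by linarith [hz.1])
    rw [abs_sub_comm]
    calc |u z - u w| ≤ 4 * K / z ^ 2 * |z - w| := hmvt
      _ ≤ 4 * K / z ^ 2 * z ^ 2 := by
          rw [abs_of_nonneg (by linarith)]
          exact mul_le_mul_of_nonneg_left hzw2 (by positivity)
      _ = 4 * K := by field_simp [hz.1.ne']
      _ ≤ _ := le_max_left _ _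
  · have hz2 : min t₀ 1 / 2 ≤ z := by linarith [min_le_right t₀ 1, hz.1]
    calc |u w - u z| ≤ |u w| + |u z| := abs_sub _ _
      _ ≤ M + M := add_le_add (hM w ⟨by linarith, hwz.trans hz.2.le⟩) (hM z ⟨hz2, hz.2.le⟩)
      _ ≤ _ := by linarith [le_max_right (4 * K) (2 * M)]

end Regularity

noncomputable def stateTerm (u : ℝ → ℝ) (x : ℝ) (s : ℕ × ℕ) : ℝ≥0∞ :=
  ENNReal.ofReal (stateProd x s * u (stateVal x s))

section Series

variable {α x : ℝ}

lemma prod_range_xfull_eq_stateProd (hα : α ∈ Ioc 0 1) (hirr : Irrational x) (n : ℕ) :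
    ∏ i ∈ Finset.range n, xfull α x i = stateProd x (state α x n) := by
  induction n with
  | zero => simp [state, stateProd_entryState, gaussProd]
  | succ n ih =>
    rw [Finset.prod_range_succ, ih, xfull_eq_stateVal hα hirr, state_succ,
      stateProd_nextState hirr (admissible_state hirr n)]

lemma Bau_eq_tsum_indicator (hα : α ∈ Ioc 0 1) (hirr : Irrational x) (u : ℝ → ℝ) :
    Bau α u x = ∑' s, (range (state α x)).indicator (stateTerm u x) s := by
  rw [← tsum_subtype, tsum_range _ (state_injective α x), Bau]
  exact tsum_congr fun n => by
    rw [stateTerm, xfull_eq_stateVal hα hirr, prod_range_xfull_eq_stateProd hα hirr]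

lemma Bau_one_eq_tsum_stateTerm (u : ℝ → ℝ) (x : ℝ) :
    Bau 1 u x = ∑' m, stateTerm u x (m, 0) := rfl

lemma nextState_mem_range {s : ℕ × ℕ} (hs : s ∈ range (state α x)) :
    nextState α x s ∈ range (state α x) := by
  obtain ⟨n, rfl⟩ := hs
  exact ⟨n + 1, state_succ α x n⟩

lemma exit_mem_range {m k : ℕ} (hk : k + 1 ≤ partialQuot x m)
    (hs : (m, k + 1) ∈ range (state α x)) : (m, partialQuot x m) ∈ range (state α x) := by
  obtain ⟨d, hd⟩ := Nat.exists_eq_add_of_le hk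
  induction d generalizing k with
  | zero => rwa [hd]
  | succ d ih =>
    refine ih (k := k + 1) (by omega) ?_ (by omega)
    simpa [nextState, show k + 2 ≤ partialQuot x m by omega] using nextState_mem_range hs

lemma entryState_succ_mem_range_or_exit_mem_range_of_mem_range (hirr : Irrational x) {m : ℕ}
    (h : entryState α x m ∈ range (state α x)) :
    entryState α x (m + 1) ∈ range (state α x) ∨ (m, partialQuot x m) ∈ range (state α x) := by
  rw [entryState] at h
  split_ifs at h
  · exact Or.inr (exit_mem_range (k := 0) (one_le_partialQuot hirr m) h)
  · exact Or.inl (nextState_mem_range h)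

lemma entryState_succ_mem_range_or_exit_mem_range (hirr : Irrational x) (m : ℕ) :
    entryState α x (m + 1) ∈ range (state α x) ∨ (m, partialQuot x m) ∈ range (state α x) := by
  induction m with
  | zero => exact entryState_succ_mem_range_or_exit_mem_range_of_mem_range hirr ⟨0, rfl⟩
  | succ m ih =>
    rcases ih with h | h
    · exact entryState_succ_mem_range_or_exit_mem_range_of_mem_range hirr h
    · exact Or.inl (nextState_exit hirr m ▸ nextState_mem_range h)

end Series

section Bounds

variable {α x : ℝ} {u : ℝ → ℝ}

lemma Admissible.snd_le (hα : α ∈ Ioc 0 1) (hirr : Irrational x) {s : ℕ × ℕ}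
    (hs : Admissible α x s) : s.2 ≤ ⌈α⁻¹⌉₊ := by
  obtain ⟨m, _ | k⟩ := s
  · exact Nat.zero_le _
  · have ha : (partialQuot x m : ℝ) < α⁻¹ := by
      rw [← one_div, lt_div_iff₀ hα.1]
      exact (mul_le_mul_of_nonneg_left hs.1 (Nat.cast_nonneg _)).trans_lt
        (partialQuot_mul_lt_one hirr m)
    exact hs.2.trans (Nat.cast_le.mp (ha.le.trans (Nat.le_ceil _)))

lemma stateVal_mem_Icc_of_lt_partialQuot (hirr : Irrational x) {m k : ℕ}
    (hk : k + 2 ≤ partialQuot x m) : stateVal x (m, k + 1) ∈ Icc (1 / 2) 1 := by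
  have hy := gaussOrbit_pos hirr m
  have hk2 : ((k : ℝ) + 2) * gaussOrbit x m < 1 := by
    exact_mod_cast natCast_mul_gaussOrbit_lt_one hirr hk
  have hc0 : 0 < 1 - (k : ℝ) * gaussOrbit x m := by nlinarith
  simp only [stateVal]
  constructor
  · rw [le_div_iff₀ hc0]; nlinarith
  · rw [div_le_one hc0]; nlinarith

lemma stateProd_mem_Icc (hirr : Irrational x) {m k : ℕ} (hs : Admissible α x (m, k)) :
    stateProd x (m, k) ∈ Icc 0 (gaussProd x m) := by
  have hP := gaussProd_pos hirr m
  obtain _ | k := k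
  · exact ⟨hP.le, le_rfl⟩
  · have := natCast_mul_gaussOrbit_lt_one hirr (Nat.le_of_succ_le hs.2)
    have := mul_nonneg (Nat.cast_nonneg (α := ℝ) k) (gaussOrbit_pos hirr m).le
    exact ⟨mul_nonneg hP.le (by linarith), mul_le_of_le_one_right hP.le (by linarith)⟩

lemma div_one_add_self_mem_Ioc {z : ℝ} (hz : z ∈ Ioo 0 1) : z / (1 + z) ∈ Ioc 0 1 :=
  ⟨div_pos hz.1 (by linarith [hz.1]), div_le_one_of_le₀ (by linarith [hz.1]) (by linarith [hz.1])⟩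

lemma stateProd_exit_mul_le (hpos : ∀ y ∈ Ioc (0 : ℝ) 1, 0 < u y) (hirr : Irrational x) {C : ℝ}
    (hC : ∀ z ∈ Ioo (0 : ℝ) 1, |u (z / (1 + z)) - u z| ≤ C) (m : ℕ) :
    stateProd x (m, partialQuot x m) * u (stateVal x (m, partialQuot x m)) ≤
      2 * (gaussProd x (m + 1) * u (gaussOrbit x (m + 1))) + 2 * C * gaussProd x (m + 1) := by
  rw [stateProd_exit hirr, stateVal_exit hirr]
  have hz := gaussOrbit_mem_Ioo hirr (m + 1)
  have hP := gaussProd_pos hirr (m + 1)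
  have huw := hpos _ (div_one_add_self_mem_Ioc hz)
  have hC' := (abs_le.mp (hC _ hz)).2
  calc gaussProd x (m + 1) * (1 + gaussOrbit x (m + 1)) *
        u (gaussOrbit x (m + 1) / (1 + gaussOrbit x (m + 1)))
      ≤ gaussProd x (m + 1) * 2 * (u (gaussOrbit x (m + 1)) + C) := by
        gcongr <;> linarith [hz.2]
    _ = _ := by ring

lemma stateTerm_succ_le_exit (hpos : ∀ y ∈ Ioc (0 : ℝ) 1, 0 < u y) (hirr : Irrational x) {C : ℝ}
    (hC : ∀ z ∈ Ioo (0 : ℝ) 1, |u (z / (1 + z)) - u z| ≤ C) (m : ℕ) :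
    stateTerm u x (m + 1, 0) ≤
      stateTerm u x (m, partialQuot x m) + ENNReal.ofReal (C * gaussProd x (m + 1)) := by
  refine (ENNReal.ofReal_le_ofReal ?_).trans ENNReal.ofReal_add_le
  change gaussProd x (m + 1) * u (gaussOrbit x (m + 1)) ≤ _
  rw [stateProd_exit hirr, stateVal_exit hirr]
  have hz := gaussOrbit_mem_Ioo hirr (m + 1)
  have hP := gaussProd_pos hirr (m + 1)
  have huw := hpos _ (div_one_add_self_mem_Ioc hz)
  have hC' := (abs_le.mp (hC _ hz)).1
  nlinarith [mul_pos hP huw, mul_pos (mul_pos hP huw) hz.1]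

lemma stateTerm_le_of_le_gaussOrbit (hirr : Irrational x) {M : ℝ}
    (hM : ∀ t ∈ Icc α 1, |u t| ≤ M) {m : ℕ} (hy : α ≤ gaussOrbit x m) :
    stateTerm u x (m, 0) ≤ ENNReal.ofReal (M * gaussProd x m) := by
  refine ENNReal.ofReal_le_ofReal ?_
  change gaussProd x m * u (gaussOrbit x m) ≤ _
  rw [mul_comm M]
  exact mul_le_mul_of_nonneg_left ((le_abs_self _).trans
    (hM _ ⟨hy, (gaussOrbit_mem_Ioo hirr m).2.le⟩)) (gaussProd_pos hirr m).le

lemma gaussProd_mul_pos (hpos : ∀ y ∈ Ioc (0 : ℝ) 1, 0 < u y) (hirr : Irrational x) (m : ℕ) :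
    0 < gaussProd x m * u (gaussOrbit x m) :=
  mul_pos (gaussProd_pos hirr m) (hpos _ (Ioo_subset_Ioc_self (gaussOrbit_mem_Ioo hirr m)))

lemma stateProd_mul_le_of_admissible (hpos : ∀ y ∈ Ioc (0 : ℝ) 1, 0 < u y) (hirr : Irrational x)
    {M C : ℝ} (hM : ∀ t ∈ Icc (1 / 2 : ℝ) 1, |u t| ≤ M) (hM0 : 0 ≤ M) (hC0 : 0 ≤ C)
    (hC : ∀ z ∈ Ioo (0 : ℝ) 1, |u (z / (1 + z)) - u z| ≤ C) {m k : ℕ}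
    (hs : Admissible α x (m, k)) :
    stateProd x (m, k) * u (stateVal x (m, k)) ≤ (2 + M + 2 * C) *
      (gaussProd x m * u (gaussOrbit x m) + gaussProd x (m + 1) * u (gaussOrbit x (m + 1)) +
        gaussProd x m) := by
  have hP := gaussProd_pos hirr m
  have hPs := gaussProd_succ_le hirr m
  have ht0 := gaussProd_mul_pos hpos hirr m
  have ht1 := gaussProd_mul_pos hpos hirr (m + 1)
  obtain _ | k := k
  · change gaussProd x m * u (gaussOrbit x m) ≤ _
    nlinarith
  by_cases hk : k + 2 ≤ partialQuot x m
  · have hv := stateVal_mem_Icc_of_lt_partialQuot hirr hk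
    have hu := (le_abs_self _).trans (hM _ hv)
    have hp := stateProd_mem_Icc hirr hs
    calc stateProd x (m, k + 1) * u (stateVal x (m, k + 1)) ≤ gaussProd x m * M :=
          mul_le_mul hp.2 hu (hpos _ ⟨by linarith [hv.1], hv.2⟩).le hP.le
      _ ≤ _ := by nlinarith
  · rw [show k + 1 = partialQuot x m by have := hs.2; omega]
    have := stateProd_exit_mul_le hpos hirr hC m
    nlinarith

lemma stateTerm_le_of_admissible (hpos : ∀ y ∈ Ioc (0 : ℝ) 1, 0 < u y) (hirr : Irrational x)
    {M C : ℝ} (hM : ∀ t ∈ Icc (1 / 2 : ℝ) 1, |u t| ≤ M) (hM0 : 0 ≤ M) (hC0 : 0 ≤ C)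
    (hC : ∀ z ∈ Ioo (0 : ℝ) 1, |u (z / (1 + z)) - u z| ≤ C) {m k : ℕ}
    (hs : Admissible α x (m, k)) :
    stateTerm u x (m, k) ≤ ENNReal.ofReal (2 + M + 2 * C) *
      (stateTerm u x (m, 0) + stateTerm u x (m + 1, 0) + ENNReal.ofReal (gaussProd x m)) := by
  refine (ENNReal.ofReal_le_ofReal
    (stateProd_mul_le_of_admissible hpos hirr hM hM0 hC0 hC hs)).trans_eq ?_
  have ht0 := (gaussProd_mul_pos hpos hirr m).le
  have ht1 := (gaussProd_mul_pos hpos hirr (m + 1)).le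
  rw [ENNReal.ofReal_mul (by positivity),
    ENNReal.ofReal_add (add_nonneg ht0 ht1) (gaussProd_pos hirr m).le, ENNReal.ofReal_add ht0 ht1]
  rfl

end Bounds

lemma tsum_le_tsum_add_tsum_of_le_succ {f g h : ℕ → ℝ≥0∞} (h0 : f 0 ≤ g 0)
    (hsucc : ∀ m, f (m + 1) ≤ g (m + 1) + h m) : ∑' m, f m ≤ ∑' m, g m + ∑' m, h m := by
  rw [tsum_eq_zero_add' ENNReal.summable, tsum_eq_zero_add' ENNReal.summable (f := g), add_assoc,
    ← ENNReal.tsum_add]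
  exact add_le_add h0 (ENNReal.tsum_le_tsum hsucc)

lemma tsum_ite_le_eq_mul (N : ℕ) (a : ℝ≥0∞) :
    ∑' k : ℕ, (if k ≤ N then a else 0) = (N + 1) * a := by
  rw [tsum_eq_sum (s := Finset.range (N + 1)) fun k hk => by simp_all]
  rw [Finset.sum_congr rfl fun k hk => if_pos (Nat.lt_succ_iff.mp (Finset.mem_range.mp hk))]
  simp

section Directions

variable {α x : ℝ} {u : ℝ → ℝ}

lemma Bau_lt_top_of_Bau_one_lt_top (hα : α ∈ Ioc 0 1) (hirr : Irrational x)
    (hpos : ∀ y ∈ Ioc (0 : ℝ) 1, 0 < u y) (hcont : ContinuousOn u (Ioc 0 1))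
    (hC1 : ContDiffOn ℝ 1 u (Ioo 0 1))
    (hx2u : ∃ L : ℝ, Tendsto (fun y => y ^ 2 * deriv u y) (𝓝[>] 0) (𝓝 L))
    (h1 : Bau 1 u x < ⊤) : Bau α u x < ⊤ := by
  obtain ⟨M, hM0, hM⟩ := exists_abs_le_of_mem_Icc hcont (c := 1 / 2) (by norm_num) (by norm_num)
  obtain ⟨C, hC0, hC⟩ := exists_abs_comp_div_one_add_sub_le hcont hC1 hx2u
  set row : ℕ → ℝ≥0∞ := fun m =>
    stateTerm u x (m, 0) + stateTerm u x (m + 1, 0) + ENNReal.ofReal (gaussProd x m)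
  have hrow_sum : ∑' m, row m < ⊤ := by
    have h1' : ∑' m, stateTerm u x (m + 1, 0) < ⊤ :=
      (ENNReal.tsum_comp_le_tsum_of_injective (add_left_injective 1)
        fun m => stateTerm u x (m, 0)).trans_lt h1
    simp only [row, ENNReal.tsum_add]
    exact ENNReal.add_lt_top.mpr
      ⟨ENNReal.add_lt_top.mpr ⟨h1, h1'⟩, tsum_ofReal_gaussProd_lt_top hirr⟩
  calc Bau α u x = ∑' s, (range (state α x)).indicator (stateTerm u x) s :=
        Bau_eq_tsum_indicator hα hirr u
    _ ≤ ∑' s : ℕ × ℕ, if s.2 ≤ ⌈α⁻¹⌉₊ then ENNReal.ofReal (2 + M + 2 * C) * row s.1 else 0 := by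
        refine ENNReal.tsum_le_tsum fun s => ?_
        by_cases hs : s ∈ range (state α x)
        · obtain ⟨n, rfl⟩ := hs
          have hadm := admissible_state (α := α) hirr n
          rw [indicator_of_mem (mem_range_self n), if_pos (hadm.snd_le hα hirr)]
          exact stateTerm_le_of_admissible hpos hirr hM hM0 hC0 hC hadm
        · rw [indicator_of_notMem hs]
          positivity
    _ = (⌈α⁻¹⌉₊ + 1) * ENNReal.ofReal (2 + M + 2 * C) * ∑' m, row m := by
        rw [ENNReal.tsum_prod', ← ENNReal.tsum_mul_left]
        exact tsum_congr fun m =>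
          (tsum_ite_le_eq_mul _ (ENNReal.ofReal (2 + M + 2 * C) * row m)).trans
            (mul_assoc _ _ _).symm
    _ < ⊤ := ENNReal.mul_lt_top (ENNReal.mul_lt_top (by simp) ENNReal.ofReal_lt_top) hrow_sum

lemma Bau_one_lt_top_of_Bau_lt_top (hα : α ∈ Ioc 0 1) (hirr : Irrational x)
    (hpos : ∀ y ∈ Ioc (0 : ℝ) 1, 0 < u y) (hcont : ContinuousOn u (Ioc 0 1))
    (hC1 : ContDiffOn ℝ 1 u (Ioo 0 1))
    (hx2u : ∃ L : ℝ, Tendsto (fun y => y ^ 2 * deriv u y) (𝓝[>] 0) (𝓝 L))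
    (hα_lt : Bau α u x < ⊤) : Bau 1 u x < ⊤ := by
  obtain ⟨M, hM0, hM⟩ := exists_abs_le_of_mem_Icc hcont hα.1 hα.2
  obtain ⟨C, hC0, hC⟩ := exists_abs_comp_div_one_add_sub_le hcont hC1 hx2u
  rw [Bau_eq_tsum_indicator hα hirr u] at hα_lt
  set F := (range (state α x)).indicator (stateTerm u x)
  set bound : ℕ → ℝ≥0∞ := fun m => ENNReal.ofReal ((M + C) * gaussProd x m) + F (m, 0)
  have hlarge : ∀ m, α ≤ gaussOrbit x m → stateTerm u x (m, 0) ≤ bound m := fun m hy =>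
    (stateTerm_le_of_le_gaussOrbit hirr hM hy).trans <| (ENNReal.ofReal_le_ofReal <|
      mul_le_mul_of_nonneg_right (by linarith) (gaussProd_pos hirr m).le).trans le_self_add
  have hsmall : ∀ m, gaussOrbit x m < α → entryState α x m ∈ range (state α x) →
      stateTerm u x (m, 0) ≤ bound m := fun m hy hm => by
    rw [entryState, if_neg (not_le.mpr hy)] at hm
    exact (indicator_of_mem hm (stateTerm u x)).symm.le.trans le_add_self
  have hexit : ∀ m, (m, partialQuot x m) ∈ range (state α x) →
      stateTerm u x (m + 1, 0) ≤ bound (m + 1) + F (m, partialQuot x m) := fun m hm => by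
    rw [show F (m, partialQuot x m) = stateTerm u x (m, partialQuot x m) from
      indicator_of_mem hm _, add_comm (bound (m + 1))]
    refine (stateTerm_succ_le_exit hpos hirr hC m).trans (add_le_add_right ?_ _)
    exact (ENNReal.ofReal_le_ofReal <| mul_le_mul_of_nonneg_right (by linarith)
      (gaussProd_pos hirr (m + 1)).le).trans le_self_add
  have hsum := tsum_le_tsum_add_tsum_of_le_succ (f := fun m => stateTerm u x (m, 0)) (g := bound)
    (h := fun m => F (m, partialQuot x m)) ?_ fun m => ?_
  · have hF : ∀ g : ℕ → ℕ × ℕ, Function.Injective g → ∑' m, F (g m) < ⊤ := fun g hg =>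
      (ENNReal.tsum_comp_le_tsum_of_injective hg F).trans_lt hα_lt
    have hP : ∑' m, ENNReal.ofReal ((M + C) * gaussProd x m) < ⊤ := by
      simp_rw [ENNReal.ofReal_mul (add_nonneg hM0 hC0), ENNReal.tsum_mul_left]
      exact ENNReal.mul_lt_top ENNReal.ofReal_lt_top (tsum_ofReal_gaussProd_lt_top hirr)
    rw [Bau_one_eq_tsum_stateTerm]
    refine hsum.trans_lt (ENNReal.add_lt_top.mpr ⟨?_, hF _ fun a b h => congrArg Prod.fst h⟩)
    simp only [bound, ENNReal.tsum_add]
    exact ENNReal.add_lt_top.mpr ⟨hP, hF _ fun a b h => congrArg Prod.fst h⟩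
  · by_cases hy : α ≤ gaussOrbit x 0
    · exact hlarge 0 hy
    · exact hsmall 0 (not_le.mp hy) ⟨0, rfl⟩
  · by_cases hy : α ≤ gaussOrbit x (m + 1)
    · exact (hlarge _ hy).trans le_self_add
    · rcases entryState_succ_mem_range_or_exit_mem_range hirr m with h | h
      · exact (hsmall _ (not_le.mp hy) h).trans le_self_add
      · exact hexit m h

end Directions

end Brjuno

theorem Bau_finite_iff (α : ℝ) (hα : α ∈ Set.Ioc (0 : ℝ) 1)
    (u : ℝ → ℝ)
    (hpos : ∀ y ∈ Set.Ioc (0 : ℝ) 1, 0 < u y)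
    (hcont : ContinuousOn u (Set.Ioc 0 1))
    (hC1 : ContDiffOn ℝ 1 u (Set.Ioo 0 1))
    (hx2u : ∃ L : ℝ, Tendsto (fun y => y ^ 2 * deriv u y) (nhdsWithin 0 (Set.Ioi 0)) (nhds L))
    (x : ℝ) (hirr : Irrational x) :
    Bau α u x < ⊤ ↔ Bau 1 u x < ⊤ :=
  ⟨Brjuno.Bau_one_lt_top_of_Bau_lt_top hα hirr hpos hcont hC1 hx2u,
    Brjuno.Bau_lt_top_of_Bau_one_lt_top hα hirr hpos hcont hC1 hx2u⟩
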